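/- Let a₊, a₋, β₁, β₂, β₃ ∈ ℝ with a₊ ≠ 0 and a₋ + 4β₃ ≠ 0. Set γ₁ = 2a₋β₁, γ₂ = −2β₂(a₋ + 4β₃), γ₃ = a₊β₃/(a₋ + 4β₃) − 4, and ȧ₊ = 4a₊a₋, ȧ₋ = 2(a₊ + a₋ − 16)a₋, β̇₁ = −a₋β₁, β̇₂ = −(a₋ + 4β₃)β₂, β̇₃ = 4β₃² + 2a₋β₃ + 4a₋. Define the complex polynomials a = X⁴ + ¼(a₊ − a₋)X³ + ½(a₊ + a₋ − 4)X² + ¼(a₊ − a₋)X + 1, b₁ = β₁(X − 1)²(X + 1), b₂ = i·β₂(X − 1)(X² + (β₃ + 2)X + 1), ȧ = ¼(ȧ₊ − ȧ₋)X³ + ½(ȧ₊ + ȧ₋)X² + ¼(ȧ₊ − ȧ₋)X, ḃ₁ = β̇₁(X − 1)²(X + 1), ḃ₂ = i·β̇₂(X − 1)(X² + (β₃ + 2)X + 1) + i·β₂β̇₃(X − 1)X, c₁ = i·γ₁(X − 1)³, c₂ = γ₂(X + 1)(X² + (γ₃ + 2)X + 1), and Q = −(4β₁γ₂(γ₃ +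 4)/a₊)·(X − 1)². Then the polynomial identities 2a·ḃ_l − ȧ·b_l = 2i·X·a·c_l' − i·c_l·(a + X·a') hold for l = 1, 2, and b₂·c₁ − b₁·c₂ = Q·a. -/

import Mathlib

/-!
The powers of `i` pair up: `b₂`, `ḃ₂` and `c₁` are `i` times polynomials with coefficients in the
base field, and `i² = -1`, so the three identities reduce to identities over any field of
characteristic zero, stated with the bracket `W(a, c) = 2X·a·c' - c·(a + X·a')` (the right-hand
side of the deformation equations is `i·W(a, c_l)`). The rational parameter `γ₃` only enters through
`(a₋ + 4β₃)(γ₃ + 2) = a₊β₃ - 2(a₋ + 4β₃)`, which clears the denominators and gives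
`Q = 8β₁β₂β₃(X - 1)²`. The remaining polynomial identities are checked pointwise.
-/

open Polynomial

noncomputable section

section SpectralQuartic

variable {K : Type*} [Field K]

def spectralQuartic (ap am : K) : K[X] :=
  X ^ 4 + C (1 / 4 * (ap - am)) * X ^ 3 + C (1 / 2 * (ap + am - 4)) * X ^ 2
    + C (1 / 4 * (ap - am)) * X + 1

def spectralQuarticVariation (dap dam : K) : K[X] :=
  C (1 / 4 * (dap - dam)) * X ^ 3 + C (1 / 2 * (dap + dam)) * X ^ 2
    + C (1 / 4 * (dap - dam)) * X

theorem wente_c₂_eq_of_clear_denom {ap am β₂ β₃ γ₃ : K} (hden : am + 4 * β₃ ≠ 0)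
    (hγ₃ : γ₃ = ap * β₃ / (am + 4 * β₃) - 4) :
    C (-2 * β₂ * (am + 4 * β₃)) * (X + 1) * (X ^ 2 + C (γ₃ + 2) * X + 1)
      = C (-2 * β₂) * (X + 1)
          * (C (am + 4 * β₃) * (X ^ 2 + 1) + C (ap * β₃ - 2 * (am + 4 * β₃)) * X) := by
  have hγ₃' : ap * β₃ - 2 * (am + 4 * β₃) = (am + 4 * β₃) * (γ₃ + 2) := by
    rw [hγ₃, sub_add, mul_sub, mul_div_cancel₀ _ hden]
    ring
  rw [hγ₃']
  simp only [map_mul]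
  ring

end SpectralQuartic

section WhithamBracket

variable {R : Type*} [CommRing R]

def whithamBracket (a c : R[X]) : R[X] :=
  2 * X * a * derivative c - c * (a + X * derivative a)

theorem whithamBracket_C_mul (a c : R[X]) (r : R) :
    whithamBracket a (C r * c) = C r * whithamBracket a c := by
  simp only [whithamBracket, derivative_C_mul]
  ring

end WhithamBracket

section WhithamIdentities

variable {K : Type*} [Field K] [CharZero K]

theorem whitham_deformation_b₁ (ap am β₁ : K) :
    2 * spectralQuartic ap am * (C (-am * β₁) * (X - 1) ^ 2 * (X + 1))
      - spectralQuarticVariation (4 * ap * am) (2 * (ap + am - 16) * am)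
        * (C β₁ * (X - 1) ^ 2 * (X + 1))
      = -whithamBracket (spectralQuartic ap am) (C (2 * am * β₁) * (X - 1) ^ 3) := by
  apply Polynomial.funext
  intro x
  simp only [spectralQuartic, spectralQuarticVariation, whithamBracket, derivative_mul,
    derivative_add, derivative_sub, derivative_pow, derivative_X, derivative_C, derivative_one,
    eval_add, eval_sub, eval_mul, eval_pow, eval_X, eval_C, eval_one, eval_ofNat, eval_neg,
    eval_zero]
  ring

theorem whitham_deformation_b₂ (ap am β₂ β₃ : K) :
    2 * spectralQuartic ap am
        * (C (-(am + 4 * β₃) * β₂) * (X - 1) * (X ^ 2 + C (β₃ + 2) * X + 1)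
          + C (β₂ * (4 * β₃ ^ 2 + 2 * am * β₃ + 4 * am)) * (X - 1) * X)
      - spectralQuarticVariation (4 * ap * am) (2 * (ap + am - 16) * am)
        * (C β₂ * (X - 1) * (X ^ 2 + C (β₃ + 2) * X + 1))
      = whithamBracket (spectralQuartic ap am)
          (C (-2 * β₂) * (X + 1)
            * (C (am + 4 * β₃) * (X ^ 2 + 1) + C (ap * β₃ - 2 * (am + 4 * β₃)) * X)) := by
  apply Polynomial.funext
  intro x
  simp only [spectralQuartic, spectralQuarticVariation, whithamBracket, derivative_mul,
    derivative_add, derivative_pow, derivative_X, derivative_C, derivative_one,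
    eval_add, eval_sub, eval_mul, eval_pow, eval_X, eval_C, eval_one, eval_ofNat, eval_zero]
  ring

theorem wente_b₂_mul_c₁_add_b₁_mul_c₂ (ap am β₁ β₂ β₃ : K) :
    C β₂ * (X - 1) * (X ^ 2 + C (β₃ + 2) * X + 1) * (C (2 * am * β₁) * (X - 1) ^ 3)
      + C β₁ * (X - 1) ^ 2 * (X + 1)
        * (C (-2 * β₂) * (X + 1)
            * (C (am + 4 * β₃) * (X ^ 2 + 1) + C (ap * β₃ - 2 * (am + 4 * β₃)) * X))
      = -(C (8 * β₁ * β₂ * β₃) * (X - 1) ^ 2 * spectralQuartic ap am) := by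
  apply Polynomial.funext
  intro x
  simp only [spectralQuartic, eval_add, eval_sub, eval_mul, eval_pow, eval_X, eval_C, eval_one,
    eval_neg]
  ring

end WhithamIdentities

end

theorem stmt_4 (ap am β₁ β₂ β₃ γ₁ γ₂ γ₃ dap dam dβ₁ dβ₂ dβ₃ : ℝ)
    (hap : ap ≠ 0) (hden : am + 4 * β₃ ≠ 0)
    (hγ₁ : γ₁ = 2 * am * β₁)
    (hγ₂ : γ₂ = -2 * β₂ * (am + 4 * β₃))
    (hγ₃ : γ₃ = ap * β₃ / (am + 4 * β₃) - 4)
    (hdap : dap = 4 * ap * am)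
    (hdam : dam = 2 * (ap + am - 16) * am)
    (hdβ₁ : dβ₁ = -am * β₁)
    (hdβ₂ : dβ₂ = -(am + 4 * β₃) * β₂)
    (hdβ₃ : dβ₃ = 4 * β₃ ^ 2 + 2 * am * β₃ + 4 * am)
    (a b₁ b₂ da db₁ db₂ c₁ c₂ Q : ℂ[X])
    (ha : a = X ^ 4 + C ((1 / 4 * (ap - am) : ℝ) : ℂ) * X ^ 3
        + C ((1 / 2 * (ap + am - 4) : ℝ) : ℂ) * X ^ 2
        + C ((1 / 4 * (ap - am) : ℝ) : ℂ) * X + 1)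
    (hb₁ : b₁ = C ((β₁ : ℝ) : ℂ) * (X - 1) ^ 2 * (X + 1))
    (hb₂ : b₂ = C Complex.I * C ((β₂ : ℝ) : ℂ) * (X - 1) *
        (X ^ 2 + C ((β₃ + 2 : ℝ) : ℂ) * X + 1))
    (hda : da = C ((1 / 4 * (dap - dam) : ℝ) : ℂ) * X ^ 3
        + C ((1 / 2 * (dap + dam) : ℝ) : ℂ) * X ^ 2
        + C ((1 / 4 * (dap - dam) : ℝ) : ℂ) * X)
    (hdb₁ : db₁ = C ((dβ₁ : ℝ) : ℂ) * (X - 1) ^ 2 * (X + 1))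
    (hdb₂ : db₂ = C Complex.I * C ((dβ₂ : ℝ) : ℂ) * (X - 1) *
          (X ^ 2 + C ((β₃ + 2 : ℝ) : ℂ) * X + 1)
        + C Complex.I * C ((β₂ * dβ₃ : ℝ) : ℂ) * (X - 1) * X)
    (hc₁ : c₁ = C Complex.I * C ((γ₁ : ℝ) : ℂ) * (X - 1) ^ 3)
    (hc₂ : c₂ = C ((γ₂ : ℝ) : ℂ) * (X + 1) * (X ^ 2 + C ((γ₃ + 2 : ℝ) : ℂ) * X + 1))
    (hQ : Q = C ((-(4 * β₁ * γ₂ * (γ₃ + 4)) / ap : ℝ) : ℂ) * (X - 1) ^ 2) :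
    (2 * a * db₁ - da * b₁ =
      2 * C Complex.I * X * a * derivative c₁
        - C Complex.I * c₁ * (a + X * derivative a)) ∧
    (2 * a * db₂ - da * b₂ =
      2 * C Complex.I * X * a * derivative c₂
        - C Complex.I * c₂ * (a + X * derivative a)) ∧
    b₂ * c₁ - b₁ * c₂ = Q * a := by
  subst hγ₁ hγ₂ hdap hdam hdβ₁ hdβ₂ hdβ₃
  have hq : -(4 * β₁ * (-2 * β₂ * (am + 4 * β₃)) * (γ₃ + 4)) / ap = 8 * β₁ * β₂ * β₃ := by
    rw [hγ₃, sub_add_cancel, div_eq_iff hap]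
    linear_combination (8 * β₁ * β₂) * mul_div_cancel₀ (ap * β₃) hden
  have hI : (C Complex.I * C Complex.I : ℂ[X]) = -1 := by
    rw [← C_mul, Complex.I_mul_I, C_neg, C_1]
  have hW (c : ℂ[X]) :
      2 * C Complex.I * X * a * derivative c - C Complex.I * c * (a + X * derivative a)
        = C Complex.I * whithamBracket a c := by
    rw [whithamBracket]
    ring
  rw [hq] at hQ
  push_cast at ha hb₁ hb₂ hda hdb₁ hdb₂ hc₁ hc₂ hQ
  rw [← spectralQuartic] at ha
  rw [← spectralQuarticVariation] at hda
  rw [mul_assoc] at hc₁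
  rw [wente_c₂_eq_of_clear_denom (ap := (ap : ℂ)) (by exact_mod_cast hden)
    (by exact_mod_cast hγ₃)] at hc₂
  subst ha hb₁ hb₂ hda hdb₁ hdb₂ hc₁ hc₂ hQ
  rw [hW, hW, whithamBracket_C_mul]
  refine ⟨?_, ?_, ?_⟩
  · linear_combination whitham_deformation_b₁ (ap : ℂ) am β₁ - whithamBracket _ _ * hI
  · linear_combination C Complex.I * whitham_deformation_b₂ (ap : ℂ) am β₂ β₃
  · linear_combination -wente_b₂_mul_c₁_add_b₁_mul_c₂ (ap : ℂ) am β₁ β₂ β₃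
      + C (β₂ : ℂ) * (X - 1) * (X ^ 2 + C (β₃ + 2 : ℂ) * X + 1)
        * (C (2 * am * β₁ : ℂ) * (X - 1) ^ 3) * hI
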